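/- arXiv:1006.3436 — 4 statements merged into one kernel-verified Lean document; each statement's English description precedes it below -/
import Mathlib

section
/- If a sequence F of finite difference dimension d (with characteristic polynomial P of degree d) satisfies some LRF of order ρ with nonzero last coefficient, then the LRF given by the coefficients of P, namely f_{n+d} = −Σ_{k=0}^{d-1} p_k f_{n+k} where P(z) = z^d + p_{d-1}z^{d-1} + … + p_0, has the minimal order among all LRFs satisfied by F. -/
/-!
Let `S` be the shift operator on sequences, so that `aeval S p f` is the sequence
`n ↦ ∑ⱼ p.coeff j * f (n + j)`. An LRF of order `r` is then exactly a monic polynomial of degree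
`r` annihilating `f`. For `e n = P(n) λⁿ` one has `(S - λ)ʲ e = λʲ (Δʲ P)(n) λⁿ`, so `e` is killed
by `(X - λ)^(deg P + 1)` but, as `λ ≠ 0` and `Δ^(deg P) P = (deg P)! · lead P ≠ 0`, not by
`(X - λ)^(deg P)`; hence the annihilator of `e` is generated by `(X - λ)^(deg P + 1)`. These
generators are pairwise coprime, so the annihilator of `f = ∑ₖ eₖ` is generated by their product
`Q`: `Q` itself gives an LRF, and every LRF polynomial is a multiple of `Q`, of degree `≥ d`.
-/

open Polynomial Finset Function fwdDiff

section Annihilator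

variable {R M : Type*} [CommRing R] [AddCommGroup M] [Module R M] (T : Module.End R M)

theorem aeval_aeval_apply (p q : R[X]) (v : M) :
    aeval T p (aeval T q v) = aeval T (q * p) v := by
  rw [mul_comm, aeval_mul, Module.End.mul_apply]

theorem aeval_apply_eq_zero_of_dvd {p q : R[X]} {v : M} (hq : aeval T q v = 0) (hqp : q ∣ p) :
    aeval T p v = 0 := by
  obtain ⟨r, rfl⟩ := hqp
  rw [← aeval_aeval_apply, hq, map_zero]

theorem aeval_apply_eq_zero_of_aeval_sum_eq_zero {ι : Type*} {s : Finset ι} {q : ι → R[X]}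
    (hq : (s : Set ι).Pairwise (IsCoprime on q)) {v : ι → M}
    (hv : ∀ i ∈ s, aeval T (q i) (v i) = 0) {p : R[X]} (hp : aeval T p (∑ i ∈ s, v i) = 0)
    {i : ι} (hi : i ∈ s) : aeval T p (v i) = 0 := by
  classical
  set r := ∏ j ∈ s.erase i, q j
  obtain ⟨a, b, hab⟩ : IsCoprime (q i) r :=
    IsCoprime.prod_right fun j hj => hq hi (mem_of_mem_erase hj) (ne_of_mem_erase hj).symm
  -- Both `q i * p` and `r * p` kill `v i` (the latter since `r` kills the other summands),
  -- and `q i`, `r` are coprime.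
  have hrp : aeval T (r * p) (v i) = 0 := by
    have hothers : ∀ j ∈ s.erase i, aeval T (r * p) (v j) = 0 := fun j hj =>
      aeval_apply_eq_zero_of_dvd T (hv j (mem_of_mem_erase hj))
        ((dvd_prod_of_mem q hj).mul_right p)
    have hsum : aeval T (r * p) (∑ j ∈ s, v j) = 0 := by
      rw [mul_comm, ← aeval_aeval_apply, hp, map_zero]
    rwa [← add_sum_erase s v hi, map_add, map_sum, sum_eq_zero hothers, add_zero] at hsum
  have hqp : aeval T (q i * p) (v i) = 0 :=
    aeval_apply_eq_zero_of_dvd T (hv i hi) (dvd_mul_right _ _)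
  rw [← one_mul p, ← hab, add_mul, map_add, LinearMap.add_apply, mul_assoc, mul_assoc,
    aeval_apply_eq_zero_of_dvd T hqp (dvd_mul_left _ _),
    aeval_apply_eq_zero_of_dvd T hrp (dvd_mul_left _ _), add_zero]

end Annihilator

section LocalAnnihilator

variable {K V : Type*} [Field K] [AddCommGroup V] [Module K V] (T : Module.End K V)

theorem eval_eq_zero_of_aeval_apply_eq_zero {μ : K} {n : ℕ} {v : V}
    (hv : aeval T ((X - C μ) ^ n) v ≠ 0) (hv' : aeval T ((X - C μ) ^ (n + 1)) v = 0)
    {p : K[X]} (hp : aeval T p v = 0) : p.eval μ = 0 := by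
  set w := aeval T ((X - C μ) ^ n) v
  have hw : T.HasEigenvector μ w := by
    refine ⟨Module.End.mem_eigenspace_iff.2 ?_, hv⟩
    rwa [pow_succ', aeval_mul, Module.End.mul_apply, map_sub, aeval_X, aeval_C,
      LinearMap.sub_apply, sub_eq_zero] at hv'
  have hpw : aeval T p w = 0 := by
    rw [aeval_aeval_apply, mul_comm, ← aeval_aeval_apply, hp, map_zero]
  rw [Module.End.aeval_apply_of_hasEigenvector hw] at hpw
  exact (smul_eq_zero.1 hpw).resolve_right hv

theorem X_sub_C_pow_succ_dvd_of_aeval_apply_eq_zero {μ : K} {n : ℕ} {v : V}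
    (hv : aeval T ((X - C μ) ^ n) v ≠ 0) (hv' : aeval T ((X - C μ) ^ (n + 1)) v = 0)
    {p : K[X]} (hp : aeval T p v = 0) : (X - C μ) ^ (n + 1) ∣ p := by
  induction n generalizing v p with
  | zero =>
    rw [zero_add, pow_one]
    exact dvd_iff_isRoot.2 (eval_eq_zero_of_aeval_apply_eq_zero T hv hv' hp)
  | succ n ih =>
    obtain ⟨q, rfl⟩ := dvd_iff_isRoot.2 (eval_eq_zero_of_aeval_apply_eq_zero T hv hv' hp)
    rw [pow_succ']
    refine mul_dvd_mul_left _ (ih (v := aeval T (X - C μ) v) ?_ ?_ ?_) <;>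
      simpa only [aeval_aeval_apply, ← pow_succ']

end LocalAnnihilator

section Shift

variable (R : Type*) [CommRing R]

def seqShift : Module.End R (ℕ → R) := LinearMap.funLeft R R Nat.succ

variable {R}

theorem seqShift_pow_apply (j : ℕ) (g : ℕ → R) (n : ℕ) : (seqShift R ^ j) g n = g (n + j) := by
  induction j generalizing g with
  | zero => rfl
  | succ j ih => rw [pow_succ, Module.End.mul_apply, ih]; rfl

noncomputable def lrfPoly (r : ℕ) (c : ℕ → R) : R[X] := X ^ r - ∑ k ∈ range r, C (c k) * X ^ k

theorem degree_sum_range_C_mul_X_pow_lt (r : ℕ) (c : ℕ → R) :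
    (∑ k ∈ range r, C (c k) * X ^ k).degree < (r : WithBot ℕ) := by
  simp_rw [← Fin.sum_univ_eq_sum_range (fun k => C (c k) * X ^ k)]
  exact degree_sum_fin_lt _

theorem lrfPoly_monic (r : ℕ) (c : ℕ → R) : (lrfPoly r c).Monic :=
  monic_X_pow_sub (degree_sum_range_C_mul_X_pow_lt r c)

theorem natDegree_lrfPoly [Nontrivial R] (r : ℕ) (c : ℕ → R) : (lrfPoly r c).natDegree = r := by
  rw [lrfPoly, natDegree_eq_of_degree_eq_some]
  rw [degree_sub_eq_left_of_degree_lt] <;> rw [degree_X_pow]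
  exact degree_sum_range_C_mul_X_pow_lt r c

theorem lrfPoly_neg_coeff {p : R[X]} (hp : p.Monic) :
    lrfPoly p.natDegree (fun k => -p.coeff k) = p := by
  conv_rhs => rw [hp.as_sum]
  simp [lrfPoly, sub_eq_add_neg, sum_neg_distrib]

theorem aeval_seqShift_lrfPoly_eq_zero_iff (r : ℕ) (c : ℕ → R) (g : ℕ → R) :
    aeval (seqShift R) (lrfPoly r c) g = 0 ↔
      ∀ n, g (n + r) = ∑ k ∈ range r, c k * g (n + k) := by
  simp [lrfPoly, funext_iff, sub_eq_zero, seqShift_pow_apply]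

def expMul (μ : R) (g : R → R) : ℕ → R := fun n => g n * μ ^ n

theorem aeval_X_sub_C_expMul (μ : R) (g : R → R) :
    aeval (seqShift R) (X - C μ) (expMul μ g) = μ • expMul μ (Δ_[1] g) := by
  ext n
  simp only [map_sub, aeval_X, aeval_C, LinearMap.sub_apply, Module.algebraMap_end_apply,
    Pi.sub_apply, Pi.smul_apply, expMul, fwdDiff, smul_eq_mul]
  change g ((n + 1 : ℕ) : R) * μ ^ (n + 1) - μ * (g n * μ ^ n) = _
  push_cast
  ring

theorem aeval_X_sub_C_pow_expMul (μ : R) (g : R → R) (j : ℕ) :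
    aeval (seqShift R) ((X - C μ) ^ j) (expMul μ g) = μ ^ j • expMul μ ((Δ_[1])^[j] g) := by
  induction j with
  | zero => simp
  | succ j ih =>
    rw [pow_succ', aeval_mul, Module.End.mul_apply, ih, map_smul, aeval_X_sub_C_expMul, smul_smul,
      ← pow_succ, iterate_succ_apply']

theorem aeval_X_sub_C_pow_natDegree_succ_expMul_eval (μ : R) (P : R[X]) :
    aeval (seqShift R) ((X - C μ) ^ (P.natDegree + 1)) (expMul μ P.eval) = 0 := by
  rw [aeval_X_sub_C_pow_expMul, fwdDiff_iter_degree_add_one_eq_zero]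
  ext n
  simp [expMul]

end Shift

section ExpPoly

variable {K : Type*} [Field K] [CharZero K]

theorem aeval_X_sub_C_pow_natDegree_expMul_eval_ne_zero {μ : K} (hμ : μ ≠ 0) {P : K[X]}
    (hP : P ≠ 0) : aeval (seqShift K) ((X - C μ) ^ P.natDegree) (expMul μ P.eval) ≠ 0 := by
  rw [aeval_X_sub_C_pow_expMul, fwdDiff_iter_degree_eq_factorial]
  intro h
  simpa [expMul, hμ, hP, Nat.factorial_ne_zero] using congrFun h 0

theorem aeval_seqShift_expMul_eval_eq_zero_iff {μ : K} (hμ : μ ≠ 0) {P : K[X]} (hP : P ≠ 0)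
    (p : K[X]) :
    aeval (seqShift K) p (expMul μ P.eval) = 0 ↔ (X - C μ) ^ (P.natDegree + 1) ∣ p :=
  ⟨X_sub_C_pow_succ_dvd_of_aeval_apply_eq_zero _
      (aeval_X_sub_C_pow_natDegree_expMul_eval_ne_zero hμ hP)
      (aeval_X_sub_C_pow_natDegree_succ_expMul_eval μ P),
    aeval_apply_eq_zero_of_dvd _ (aeval_X_sub_C_pow_natDegree_succ_expMul_eval μ P)⟩

theorem aeval_seqShift_sum_expMul_eval_eq_zero_iff {ι : Type*} [Fintype ι] {μ : ι → K}
    (hμ : Injective μ) (hμ0 : ∀ i, μ i ≠ 0) {P : ι → K[X]} (hP : ∀ i, P i ≠ 0) (p : K[X]) :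
    aeval (seqShift K) p (∑ i, expMul (μ i) (P i).eval) = 0 ↔
      ∏ i, (X - C (μ i)) ^ ((P i).natDegree + 1) ∣ p := by
  set q : ι → K[X] := fun i => (X - C (μ i)) ^ ((P i).natDegree + 1)
  have hq : Pairwise (IsCoprime on q) := fun i j hij => (pairwise_coprime_X_sub_C hμ hij).pow
  have hqe : ∀ i, aeval (seqShift K) (q i) (expMul (μ i) (P i).eval) = 0 := fun i =>
    aeval_X_sub_C_pow_natDegree_succ_expMul_eval (μ i) (P i)
  constructor
  · intro hp
    refine prod_dvd_of_coprime (hq.set_pairwise _) fun i _ => ?_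
    exact (aeval_seqShift_expMul_eval_eq_zero_iff (hμ0 i) (hP i) p).1 <|
      aeval_apply_eq_zero_of_aeval_sum_eq_zero _ (hq.set_pairwise _) (fun i _ => hqe i) hp
        (mem_univ i)
  · intro hQp
    rw [map_sum]
    exact sum_eq_zero fun i _ =>
      aeval_apply_eq_zero_of_dvd _ (hqe i) ((dvd_prod_of_mem q (mem_univ i)).trans hQp)

end ExpPoly

theorem charpoly_lrf_minimal_order_general
    (f : ℕ → ℂ) (m : ℕ) (lam : Fin m → ℂ) (P : Fin m → Polynomial ℂ)
    (hinj : Function.Injective lam) (hne : ∀ k, lam k ≠ 0) (hP : ∀ k, P k ≠ 0)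
    (hf : ∀ n : ℕ, f n = ∑ k, (P k).eval (n : ℂ) * lam k ^ n)
    (Q : Polynomial ℂ) (hQ : Q = ∏ k, (X - C (lam k)) ^ ((P k).natDegree + 1))
    (d : ℕ) (hd : d = Q.natDegree) :
    (∀ n : ℕ, f (n + d) = -∑ k ∈ Finset.range d, Q.coeff k * f (n + k)) ∧
    (∀ (r : ℕ) (c : ℕ → ℂ),
      (∀ n : ℕ, f (n + r) = ∑ k ∈ Finset.range r, c k * f (n + k)) → d ≤ r) := by
  have hf_sum : f = ∑ k, expMul (lam k) (P k).eval := funext fun n => by simp [hf, expMul]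
  have hann : ∀ p, aeval (seqShift ℂ) p f = 0 ↔ Q ∣ p := fun p => by
    rw [hf_sum, hQ]
    exact aeval_seqShift_sum_expMul_eval_eq_zero_iff hinj hne hP p
  have hQ_monic : Q.Monic := hQ ▸ monic_prod_of_monic _ _ fun k _ => (monic_X_sub_C _).pow _
  subst hd
  refine ⟨fun n => ?_, fun r c hc => ?_⟩
  · have hQ_lrf := (aeval_seqShift_lrfPoly_eq_zero_iff _ _ f).1
      ((lrfPoly_neg_coeff hQ_monic).symm ▸ (hann Q).2 dvd_rfl) n
    simpa [sum_neg_distrib] using hQ_lrf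
  · calc Q.natDegree ≤ (lrfPoly r c).natDegree :=
          natDegree_le_of_dvd ((hann _).1 ((aeval_seqShift_lrfPoly_eq_zero_iff r c f).2 hc))
            (lrfPoly_monic r c).ne_zero
      _ = r := natDegree_lrfPoly r c

/-- If a sequence of finite difference dimension `d` (with characteristic
polynomial `Q` of degree `d`) satisfies some LRF with nonzero last coefficient,
then the LRF given by the coefficients of `Q` is satisfied by `f` and has minimal
order among all LRFs satisfied by `f`. -/
theorem charpoly_lrf_minimal_order
    (f : ℕ → ℂ) (m : ℕ) (lam : Fin m → ℂ) (P : Fin m → Polynomial ℂ)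
    (hinj : Function.Injective lam) (hne : ∀ k, lam k ≠ 0) (hP : ∀ k, P k ≠ 0)
    (hf : ∀ n : ℕ, f n = ∑ k, (P k).eval (n : ℂ) * lam k ^ n)
    (Q : Polynomial ℂ) (hQ : Q = ∏ k, (X - C (lam k)) ^ ((P k).natDegree + 1))
    (d : ℕ) (hd : d = Q.natDegree)
    (ρ : ℕ) (a : ℕ → ℂ) (ha : a 0 ≠ 0)
    (hlrf : ∀ n : ℕ, f (n + ρ) = ∑ k ∈ Finset.range ρ, a k * f (n + k)) :
    (∀ n : ℕ, f (n + d) = -∑ k ∈ Finset.range d, Q.coeff k * f (n + k)) ∧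
    (∀ (r : ℕ) (c : ℕ → ℂ),
      (∀ n : ℕ, f (n + r) = ∑ k ∈ Finset.range r, c k * f (n + k)) → d ≤ r) :=
  charpoly_lrf_minimal_order_general f m lam P hinj hne hP hf Q hQ d hd
end

section
/- Let F_N have difference dimension d with characteristic polynomial P(z), and d < L ≤ N − d + 1. A vector B = (b_0,…,b_{L-1})^T belongs to the relations space ℜ^{(L)}(F_N) if and only if its generating polynomial B(z) = b_{L-1}z^{L-1} + … + b_1 z + b_0 is a polynomial multiple of P(z). -/
open Polynomial Finset

/-- Trajectory space: span of lagged vectors of the first `N` values of `f`. -/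
noncomputable def trajSpace (f : ℕ → ℂ) (N L : ℕ) : Submodule ℂ (Fin L → ℂ) :=
  Submodule.span ℂ {v : Fin L → ℂ | ∃ i : ℕ, i + L ≤ N ∧ v = fun j : Fin L => f (i + (j : ℕ))}

/-- The Hermitian inner product on `Fin L → ℂ`. -/
noncomputable def hinner {L : ℕ} (u v : Fin L → ℂ) : ℂ :=
  ∑ i, (starRingEnd ℂ) (u i) * v i

/-- Membership in the relations space: the componentwise conjugate lies in the
orthogonal complement of the trajectory space. -/
def inRelSpace (f : ℕ → ℂ) (N L : ℕ) (v : Fin L → ℂ) : Prop :=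
  ∀ u ∈ trajSpace f N L, hinner u (fun i => (starRingEnd ℂ) (v i)) = 0


/-! Writing `S` for the shift of sequences, `∑ b_k f(i + k) = (B(S) f)(i)`, so `B` is a
relation iff the first `N - L + 1 ≥ d` terms of `B(S) f` vanish. Since `Q(S)` kills `f`, it
kills `B(S) f`, and a solution of a monic recurrence of order `d` whose first `d` terms vanish is
zero; hence `B` is a relation iff `B(S) f = 0`. The annihilator of `f` is exactly `(Q)`: as
`(S - λ)(p(n) λⁿ) = λ (Δp)(n) λⁿ`, the operator `(S - λ)^(deg p)` turns `p(n) λⁿ` into a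
nonzero multiple of `λⁿ`, on which `A(S)` acts as the scalar `A(λ)`. After removing the other
terms of `f` by their own factors of `Q`, this shows that `A(S) f = 0` forces
`(X - λ_k)^(deg P_k + 1) ∣ A`. -/

lemma fwdDiff_iter_comp_natCast {M G : Type*} [AddCommMonoidWithOne M] [AddCommGroup G]
    (F : M → G) (j : ℕ) :
    (fwdDiff 1)^[j] (fun n : ℕ => F n) = fun n : ℕ => ((fwdDiff 1)^[j] F) n := by
  induction j with
  | zero => rfl
  | succ j ih =>
    rw [Function.iterate_succ_apply', Function.iterate_succ_apply', ih]
    ext n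
    simp [fwdDiff]

section Shift

variable {R : Type*} [CommSemiring R]

noncomputable def shift : Module.End R (ℕ → R) := LinearMap.funLeft R R Nat.succ

lemma shift_pow_apply (g : ℕ → R) (j n : ℕ) : (shift ^ j) g n = g (n + j) := by
  induction j generalizing g with
  | zero => rfl
  | succ j ih => rw [pow_succ, Module.End.mul_apply, ih]; rfl

lemma aeval_shift_apply (A : R[X]) (g : ℕ → R) (n : ℕ) :
    aeval shift A g n = ∑ j ∈ range (A.natDegree + 1), A.coeff j * g (n + j) := by
  simp [aeval_eq_sum_range, shift_pow_apply]

lemma aeval_shift_sum_C_mul_X_pow_apply {L : ℕ} (B : Fin L → R) (g : ℕ → R) (n : ℕ) :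
    aeval shift (∑ k : Fin L, C (B k) * X ^ (k : ℕ)) g n = B ⬝ᵥ fun k => g (n + k) := by
  simp [dotProduct, shift_pow_apply]

lemma aeval_shift_geom (A : R[X]) (a : R) :
    aeval shift A (a ^ ·) = A.eval a • (a ^ ·) := by
  ext n
  simp only [aeval_shift_apply, eval_eq_sum_range, pow_add, Pi.smul_apply, smul_eq_mul,
    Finset.sum_mul]
  exact Finset.sum_congr rfl fun j _ => by ring

lemma eq_zero_of_aeval_shift_monic_eq_zero {Q : R[X]} (hQ : Q.Monic) {g : ℕ → R}
    (hg : aeval shift Q g = 0) (hinit : ∀ i < Q.natDegree, g i = 0) : g = 0 := by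
  suffices ∀ n, g n = 0 from funext this
  intro n
  induction n using Nat.strong_induction_on with
  | _ n ih =>
    obtain hn | hn := Nat.lt_or_ge n Q.natDegree
    · exact hinit n hn
    obtain ⟨i, rfl⟩ := Nat.exists_eq_add_of_le' hn
    have hrec := congrFun hg i
    have hlower : ∑ j ∈ range Q.natDegree, Q.coeff j * g (i + j) = 0 :=
      sum_eq_zero fun j hj => by rw [ih (i + j) (by have := mem_range.mp hj; omega), mul_zero]
    rw [aeval_shift_apply, Finset.sum_range_succ, hlower, hQ.coeff_natDegree, one_mul] at hrec
    simpa using hrec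

end Shift

section ShiftRing

variable {R : Type*} [CommRing R]

lemma aeval_shift_X_sub_C_pow_mul_geom (a : R) (g : ℕ → R) (j : ℕ) :
    aeval shift ((X - C a) ^ j) (fun n => g n * a ^ n) =
      fun n => a ^ j * ((fwdDiff 1)^[j] g) n * a ^ n := by
  induction j with
  | zero => simp
  | succ j ih =>
    ext n
    rw [pow_succ', map_mul, Module.End.mul_apply, ih]
    simp only [shift, aeval_sub, aeval_X, aeval_C, LinearMap.sub_apply,
      Module.algebraMap_end_apply, Pi.sub_apply, LinearMap.funLeft_apply, Nat.succ_eq_add_one,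
      Pi.smul_apply, smul_eq_mul, Function.iterate_succ_apply', fwdDiff]
    ring

def quasiExp (P : R[X]) (a : R) : ℕ → R := fun n => P.eval (n : R) * a ^ n

lemma aeval_shift_X_sub_C_pow_quasiExp (P : R[X]) (a : R) (j : ℕ) :
    aeval shift ((X - C a) ^ j) (quasiExp P a) =
      fun n : ℕ => a ^ j * ((fwdDiff 1)^[j] P.eval) (n : R) * a ^ n := by
  have := aeval_shift_X_sub_C_pow_mul_geom a (fun n : ℕ => P.eval (n : R)) j
  rwa [fwdDiff_iter_comp_natCast P.eval] at this

lemma aeval_shift_X_sub_C_pow_natDegree_succ_quasiExp (P : R[X]) (a : R) :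
    aeval shift ((X - C a) ^ (P.natDegree + 1)) (quasiExp P a) = 0 := by
  rw [aeval_shift_X_sub_C_pow_quasiExp, P.fwdDiff_iter_degree_add_one_eq_zero]
  ext n
  simp

lemma aeval_shift_X_sub_C_pow_natDegree_quasiExp (P : R[X]) (a : R) :
    aeval shift ((X - C a) ^ P.natDegree) (quasiExp P a) =
      (a ^ P.natDegree * P.leadingCoeff * P.natDegree.factorial) • (a ^ ·) := by
  rw [aeval_shift_X_sub_C_pow_quasiExp, P.fwdDiff_iter_degree_eq_factorial]
  ext n
  simp [mul_assoc]

lemma aeval_shift_prod_sum_quasiExp {ι : Type*} (s : Finset ι) (a : ι → R) (P : ι → R[X]) :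
    aeval shift (∏ k ∈ s, (X - C (a k)) ^ ((P k).natDegree + 1))
      (∑ k ∈ s, quasiExp (P k) (a k)) = 0 := by
  classical
  rw [map_sum]
  refine Finset.sum_eq_zero fun k hk => ?_
  rw [← Finset.prod_erase_mul _ _ hk, map_mul, Module.End.mul_apply,
    aeval_shift_X_sub_C_pow_natDegree_succ_quasiExp, map_zero]

end ShiftRing

section Field

variable {K : Type*} [Field K] [CharZero K]

lemma X_sub_C_pow_dvd_of_aeval_shift_quasiExp_eq_zero {P A : K[X]} {a : K} (hP : P ≠ 0)
    (ha : a ≠ 0) (h : aeval shift A (quasiExp P a) = 0) :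
    (X - C a) ^ (P.natDegree + 1) ∣ A := by
  rcases eq_or_ne A 0 with rfl | hA
  · exact dvd_zero _
  obtain ⟨A', hA', hA'a⟩ := A.exists_eq_pow_rootMultiplicity_mul_and_not_dvd hA a
  rw [← le_rootMultiplicity_iff hA]
  set m := A.rootMultiplicity a
  by_contra! hlt
  -- `A' * (X - C a) ^ deg P` is a multiple of `A`, yet it sends `quasiExp P a` to a nonzero
  -- multiple of `(a ^ ·)`, the factor being `A'(a) ≠ 0` times the constant `Δ^(deg P) P`.
  have hkill : aeval shift (A' * (X - C a) ^ P.natDegree) (quasiExp P a) = 0 := by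
    have : A' * (X - C a) ^ P.natDegree = (X - C a) ^ (P.natDegree - m) * A := by
      rw [hA', ← mul_assoc, ← pow_add, Nat.sub_add_cancel (by omega), mul_comm]
    rw [this, map_mul, Module.End.mul_apply, h, map_zero]
  rw [map_mul, Module.End.mul_apply, aeval_shift_X_sub_C_pow_natDegree_quasiExp, map_smul,
    aeval_shift_geom, smul_smul] at hkill
  have := congrFun hkill 0
  simp only [Pi.smul_apply, pow_zero, smul_eq_mul, mul_one, Pi.zero_apply] at this
  rw [dvd_iff_isRoot] at hA'a
  exact hA'a (by simpa [ha, hP, Nat.factorial_ne_zero] using this)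

lemma prod_dvd_of_aeval_shift_sum_quasiExp_eq_zero {ι : Type*} [Fintype ι] {a : ι → K}
    {P : ι → K[X]} (ha_inj : Function.Injective a) (ha : ∀ k, a k ≠ 0) (hP : ∀ k, P k ≠ 0)
    {A : K[X]} (h : aeval shift A (∑ k, quasiExp (P k) (a k)) = 0) :
    ∏ k, (X - C (a k)) ^ ((P k).natDegree + 1) ∣ A := by
  classical
  have hcop : ∀ i j, i ≠ j → ∀ m n : ℕ, IsCoprime ((X - C (a i)) ^ m) ((X - C (a j)) ^ n) :=
    fun i j hij _ _ => (pairwise_coprime_X_sub_C ha_inj hij).pow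
  refine Finset.prod_dvd_of_coprime (fun i _ j _ hij => hcop i j hij _ _) fun k _ => ?_
  set T := ∏ j ∈ univ.erase k, (X - C (a j)) ^ ((P j).natDegree + 1)
  have hTA : aeval shift (T * A) (quasiExp (P k) (a k)) = 0 := by
    have hall : aeval shift (T * A) (∑ j, quasiExp (P j) (a j)) = 0 := by
      rw [map_mul, Module.End.mul_apply, h, map_zero]
    have hrest : aeval shift (T * A) (∑ j ∈ univ.erase k, quasiExp (P j) (a j)) = 0 := by
      rw [mul_comm, map_mul, Module.End.mul_apply, aeval_shift_prod_sum_quasiExp, map_zero]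
    rwa [← add_sum_erase univ (fun j => quasiExp (P j) (a j)) (mem_univ k), map_add, hrest,
      add_zero] at hall
  have hcopT : IsCoprime ((X - C (a k)) ^ ((P k).natDegree + 1)) T :=
    IsCoprime.prod_right fun j hj => hcop k j (ne_of_mem_erase hj).symm _ _
  exact hcopT.dvd_of_dvd_mul_left
    (X_sub_C_pow_dvd_of_aeval_shift_quasiExp_eq_zero (hP k) (ha k) hTA)

lemma aeval_shift_sum_quasiExp_eq_zero_iff {ι : Type*} [Fintype ι] {a : ι → K}
    {P : ι → K[X]} (ha_inj : Function.Injective a) (ha : ∀ k, a k ≠ 0) (hP : ∀ k, P k ≠ 0)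
    (A : K[X]) :
    aeval shift A (∑ k, quasiExp (P k) (a k)) = 0 ↔
      ∏ k, (X - C (a k)) ^ ((P k).natDegree + 1) ∣ A := by
  refine ⟨prod_dvd_of_aeval_shift_sum_quasiExp_eq_zero ha_inj ha hP, fun ⟨A', hA'⟩ => ?_⟩
  rw [hA', mul_comm, map_mul, Module.End.mul_apply, aeval_shift_prod_sum_quasiExp, map_zero]

end Field

lemma hinner_star_eq_star_dotProduct {L : ℕ} (u v : Fin L → ℂ) :
    hinner u (fun i => (starRingEnd ℂ) (v i)) = (starRingEnd ℂ) (v ⬝ᵥ u) := by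
  simp [hinner, dotProduct, mul_comm]

lemma inRelSpace_iff_forall_dotProduct_eq_zero (f : ℕ → ℂ) (N L : ℕ) (B : Fin L → ℂ) :
    inRelSpace f N L B ↔ ∀ i, i + L ≤ N → B ⬝ᵥ (fun j : Fin L => f (i + j)) = 0 := by
  classical
  have hspan : trajSpace f N L ≤ LinearMap.ker (dotProductEquiv ℂ (Fin L) B) ↔
      ∀ i, i + L ≤ N → B ⬝ᵥ (fun j : Fin L => f (i + j)) = 0 := by
    rw [trajSpace, Submodule.span_le]
    exact ⟨fun h i hi => h ⟨i, hi, rfl⟩, fun h _ ⟨i, hi, hv⟩ => hv ▸ h i hi⟩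
  rw [← hspan]
  simp [inRelSpace, hinner_star_eq_star_dotProduct, SetLike.le_def]

theorem mem_relations_space_iff_charpoly_dvd_general
    (f : ℕ → ℂ) (m : ℕ) (lam : Fin m → ℂ) (P : Fin m → Polynomial ℂ)
    (hinj : Function.Injective lam) (hne : ∀ k, lam k ≠ 0) (hP : ∀ k, P k ≠ 0)
    (hf : ∀ n : ℕ, f n = ∑ k, (P k).eval (n : ℂ) * lam k ^ n)
    (Q : Polynomial ℂ) (hQ : Q = ∏ k, (X - C (lam k)) ^ ((P k).natDegree + 1))
    (d : ℕ) (hd : d = Q.natDegree)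
    (N L : ℕ) (hLN : L + d ≤ N + 1)
    (B : Fin L → ℂ) :
    inRelSpace f N L B ↔ Q ∣ ∑ k : Fin L, C (B k) * X ^ (k : ℕ) := by
  have hf_sum : f = ∑ k, quasiExp (P k) (lam k) := funext fun n => by simp [hf, quasiExp]
  have hQf : aeval shift Q f = 0 := by rw [hQ, hf_sum]; exact aeval_shift_prod_sum_quasiExp _ _ _
  have hQm : Q.Monic := hQ ▸ monic_prod_of_monic _ _ fun k _ => (monic_X_sub_C _).pow _
  rw [inRelSpace_iff_forall_dotProduct_eq_zero, hQ,
    ← aeval_shift_sum_quasiExp_eq_zero_iff hinj hne hP, ← hf_sum]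
  simp only [← aeval_shift_sum_C_mul_X_pow_apply]
  refine ⟨fun h => eq_zero_of_aeval_shift_monic_eq_zero hQm ?_ fun i hi => h i (by omega),
    fun h i _ => by rw [h, Pi.zero_apply]⟩
  rw [← Module.End.mul_apply, ← map_mul, mul_comm, map_mul, Module.End.mul_apply, hQf, map_zero]

/-- A vector `B` lies in the relations space of a series of difference dimension `d`
with characteristic polynomial `Q`, `d < L ≤ N - d + 1`, iff its generating
polynomial is a multiple of `Q`. -/
theorem mem_relations_space_iff_charpoly_dvd
    (f : ℕ → ℂ) (m : ℕ) (lam : Fin m → ℂ) (P : Fin m → Polynomial ℂ)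
    (hinj : Function.Injective lam) (hne : ∀ k, lam k ≠ 0) (hP : ∀ k, P k ≠ 0)
    (hf : ∀ n : ℕ, f n = ∑ k, (P k).eval (n : ℂ) * lam k ^ n)
    (Q : Polynomial ℂ) (hQ : Q = ∏ k, (X - C (lam k)) ^ ((P k).natDegree + 1))
    (d : ℕ) (hd : d = Q.natDegree)
    (N L : ℕ) (hdN : 2 * d ≤ N) (hdL : d < L) (hLN : L + d ≤ N + 1)
    (B : Fin L → ℂ) :
    inRelSpace f N L B ↔ Q ∣ ∑ k : Fin L, C (B k) * X ^ (k : ℕ) :=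
  mem_relations_space_iff_charpoly_dvd_general f m lam P hinj hne hP hf Q hQ d hd N L hLN B
end

section
/- Let F_N^{(1)} be the exponential series f_n = λ^n (λ ≠ 0) and L ≤ N/2. A nonzero f.d.d. time series F^{(2)}_N is left-separable from F^{(1)}_N if and only if f^{(2)}_n = Σ_{k=1}^{L-1} c_k μ_k^n where μ_k = exp(2πik/L)/\overline{λ} and the c_k ∈ ℂ are not all zero. -/
open Polynomial Finset Real

/-!
Orthogonality of the two trajectory spaces says that the filtered series
`g i = ∑_{j<L} conj(λ)^j f₂(i + j)` vanishes for `i + L ≤ N`. For `f₂ n = ∑ₖ Pₖ(n) λₖⁿ` the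
filtered series is again an exponential polynomial `∑ₖ Qₖ(i) λₖⁱ`, where
`Qₖ(x) = ∑_{j<L} tₖ^j Pₖ(x + j)` and `tₖ = conj(λ) λₖ`. It vanishes at `∑ₖ (deg Pₖ + 1)`
consecutive indices, so every `Qₖ` is zero. The leading coefficient of `Qₖ` is
`(∑_{j<L} tₖ^j) · lc Pₖ`, so `tₖ` is a nontrivial `L`-th root of unity, and then
`∑_{j<L} j tₖ^j ≠ 0` forces `Pₖ` to be constant: the filter commutes with differentiation and
does not kill nonconstant linear polynomials. Conversely the filtered series of `μₖⁿ` is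
`μₖⁱ ∑_{j<L} ωₖ^j = 0`.
-/

lemma mul_sum_range_natCast_mul_pow {R : Type*} [CommRing R] (t : R) (L : ℕ) :
    (t - 1) * ∑ j ∈ range L, (j : R) * t ^ j = L * t ^ L - t * ∑ j ∈ range L, t ^ j := by
  induction L with
  | zero => simp
  | succ n ih =>
    rw [sum_range_succ, sum_range_succ]
    push_cast
    linear_combination ih

section Field

variable {K : Type*} [Field K] [CharZero K]

lemma geom_sum_eq_zero_iff_pow_eq_one {t : K} {L : ℕ} (hL : L ≠ 0) :
    ∑ j ∈ range L, t ^ j = 0 ↔ t ^ L = 1 ∧ t ≠ 1 := by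
  constructor
  · intro h
    have ht : t ≠ 1 := by
      rintro rfl
      simp [hL] at h
    refine ⟨?_, ht⟩
    have := geom_sum_mul t L
    rwa [h, zero_mul, eq_comm, sub_eq_zero] at this
  · rintro ⟨h, ht⟩
    rw [geom_sum_eq ht, h, sub_self, zero_div]

lemma sum_range_natCast_mul_pow_ne_zero {t : K} {L : ℕ} (hL : L ≠ 0)
    (h : ∑ j ∈ range L, t ^ j = 0) : ∑ j ∈ range L, (j : K) * t ^ j ≠ 0 := by
  intro h₁
  have := mul_sum_range_natCast_mul_pow t L
  rw [h₁, h, ((geom_sum_eq_zero_iff_pow_eq_one hL).mp h).1, mul_zero, mul_zero, mul_one,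
    sub_zero] at this
  exact hL (by exact_mod_cast this.symm)

end Field

lemma Complex.exp_two_pi_I_div_pow (k L : ℕ) :
    Complex.exp (2 * π * Complex.I / L) ^ k = Complex.exp (2 * π * Complex.I * k / L) := by
  rw [← Complex.exp_nat_mul]
  ring_nf

lemma Complex.geom_sum_eq_zero_iff_exists_exp {t : ℂ} {L : ℕ} (hL : L ≠ 0) :
    ∑ j ∈ range L, t ^ j = 0 ↔ ∃ k ∈ Ico 1 L, t = Complex.exp (2 * π * Complex.I * k / L) := by
  have hζ := Complex.isPrimitiveRoot_exp L hL
  have : NeZero L := ⟨hL⟩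
  rw [geom_sum_eq_zero_iff_pow_eq_one hL]
  constructor
  · rintro ⟨htL, ht⟩
    obtain ⟨k, hkL, rfl⟩ := hζ.eq_pow_of_pow_eq_one htL
    refine ⟨k, mem_Ico.mpr ⟨Nat.one_le_iff_ne_zero.mpr ?_, hkL⟩,
      Complex.exp_two_pi_I_div_pow k L⟩
    rintro rfl
    exact ht (pow_zero _)
  · rintro ⟨k, hk, rfl⟩
    rw [mem_Ico] at hk
    rw [← Complex.exp_two_pi_I_div_pow, pow_right_comm, hζ.pow_eq_one, one_pow]
    refine ⟨rfl, fun h => ?_⟩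
    exact absurd (Nat.le_of_dvd hk.1 ((hζ.pow_eq_one_iff_dvd k).mp h)) (by omega)

namespace Polynomial

section CommSemiring

variable {R : Type*} [CommSemiring R]

lemma derivative_taylor (r : R) (p : R[X]) :
    derivative (taylor r p) = taylor r (derivative p) := by
  simp [taylor_apply, derivative_comp]

noncomputable def shiftSum (t : R) (L : ℕ) : R[X] →ₗ[R] R[X] :=
  ∑ j ∈ range L, t ^ j • taylor (j : R)

lemma shiftSum_apply (t : R) (L : ℕ) (p : R[X]) :
    shiftSum t L p = ∑ j ∈ range L, t ^ j • taylor (j : R) p := by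
  simp [shiftSum]

lemma eval_shiftSum (t x : R) (L : ℕ) (p : R[X]) :
    (shiftSum t L p).eval x = ∑ j ∈ range L, t ^ j * p.eval (x + j) := by
  simp [shiftSum_apply, eval_finsetSum, taylor_eval]

lemma degree_shiftSum_le (t : R) (L : ℕ) (p : R[X]) : (shiftSum t L p).degree ≤ p.degree := by
  rw [shiftSum_apply]
  exact (degree_sum_le _ _).trans
    (Finset.sup_le fun j _ => (degree_smul_le _ _).trans (degree_taylor p j).le)

lemma coeff_shiftSum_natDegree (t : R) (L : ℕ) (p : R[X]) :
    (shiftSum t L p).coeff p.natDegree = (∑ j ∈ range L, t ^ j) * p.leadingCoeff := by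
  simp [shiftSum_apply, coeff_taylor_natDegree, sum_mul]

lemma derivative_shiftSum (t : R) (L : ℕ) (p : R[X]) :
    derivative (shiftSum t L p) = shiftSum t L (derivative p) := by
  simp [shiftSum_apply, derivative_taylor]

lemma eval_zero_shiftSum_C_mul_X_add_C (t a b : R) (L : ℕ) :
    (shiftSum t L (C a * X + C b)).eval 0 =
      a * ∑ j ∈ range L, (j : R) * t ^ j + b * ∑ j ∈ range L, t ^ j := by
  simp only [eval_shiftSum, eval_add, eval_mul, eval_C, eval_X, zero_add, mul_sum,
    ← sum_add_distrib]
  exact sum_congr rfl fun j _ => by ring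

end CommSemiring

lemma degree_taylor_sub_lt {R : Type*} [CommRing R] (r : R) {p : R[X]} {n : ℕ}
    (hp : p.degree < (n + 1 : ℕ)) : (taylor r p - p).degree < n := by
  rcases eq_or_ne p.natDegree 0 with h₀ | h₀
  · rw [eq_C_of_natDegree_eq_zero h₀, taylor_C, sub_self, degree_zero]
    exact WithBot.bot_lt_coe n
  · have hp₀ : p ≠ 0 := by rintro rfl; exact h₀ natDegree_zero
    calc (taylor r p - p).degree < p.degree := degree_taylor p r ▸
          degree_sub_lt_left (degree_taylor p r) ((taylor_eq_zero r p).not.mpr hp₀)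
            (leadingCoeff_taylor r p)
      _ ≤ n := degree_le_of_natDegree_le
          (Nat.lt_succ_iff.mp ((natDegree_lt_iff_degree_lt hp₀).mpr hp))

lemma degree_smul_taylor_sub_smul_lt {R : Type*} [CommRing R] (a b r : R) {p : R[X]} {n : ℕ}
    (hp : p.degree < n) : (a • taylor r p - b • p).degree < n :=
  (degree_sub_le _ _).trans_lt (max_lt
    ((degree_smul_le _ _).trans_lt ((degree_taylor _ _).trans_lt hp))
    ((degree_smul_le _ _).trans_lt hp))

section Field

variable {K : Type*} [Field K]

lemma geom_sum_eq_zero_of_shiftSum_eq_zero {t : K} {L : ℕ} {p : K[X]} (hp : p ≠ 0)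
    (h : shiftSum t L p = 0) : ∑ j ∈ range L, t ^ j = 0 := by
  have := coeff_shiftSum_natDegree t L p
  rw [h, coeff_zero, eq_comm, mul_eq_zero] at this
  exact this.resolve_right (leadingCoeff_ne_zero.mpr hp)

lemma shiftSum_ne_zero_of_natDegree_eq_one [CharZero K] {t : K} {L : ℕ} (hL : L ≠ 0)
    {p : K[X]} (hp : p.natDegree = 1) : shiftSum t L p ≠ 0 := by
  have hp₀ : p ≠ 0 := ne_zero_of_natDegree_gt (n := 0) (by omega)
  intro h
  have hgeom := geom_sum_eq_zero_of_shiftSum_eq_zero hp₀ h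
  have heval := congrArg (eval 0) h
  rw [eq_X_add_C_of_natDegree_le_one hp.le, eval_zero_shiftSum_C_mul_X_add_C, hgeom, mul_zero,
    add_zero, eval_zero, mul_eq_zero] at heval
  have hlead : p.coeff 1 ≠ 0 := hp ▸ leadingCoeff_ne_zero.mpr hp₀
  exact heval.elim hlead (sum_range_natCast_mul_pow_ne_zero hL hgeom)

lemma natDegree_eq_zero_of_shiftSum_eq_zero [CharZero K] {t : K} {L : ℕ} (hL : L ≠ 0)
    {p : K[X]} (h : shiftSum t L p = 0) : p.natDegree = 0 := by
  suffices ∀ n (p : K[X]), p.natDegree = n + 1 → shiftSum t L p ≠ 0 by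
    by_contra hp
    obtain ⟨n, hn⟩ := Nat.exists_eq_succ_of_ne_zero hp
    exact this n p hn h
  intro n
  induction n with
  | zero => exact fun p hp => shiftSum_ne_zero_of_natDegree_eq_one hL hp
  | succ n ih =>
    intro p hp h
    refine ih (derivative p) (by rw [natDegree_derivative, hp]; rfl) ?_
    rw [← derivative_shiftSum, h, derivative_zero]

lemma eq_zero_of_smul_taylor_eq_smul {a b r : K} (hab : a ≠ b) {p : K[X]}
    (h : a • taylor r p = b • p) : p = 0 := by
  have := congrArg leadingCoeff h
  rw [smul_eq_C_mul, smul_eq_C_mul, leadingCoeff_mul, leadingCoeff_mul, leadingCoeff_C,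
    leadingCoeff_C, leadingCoeff_taylor] at this
  exact leadingCoeff_eq_zero.mp ((mul_eq_mul_right_iff.mp this).resolve_left hab)

lemma eq_zero_of_taylor_one_eq_self [CharZero K] {p : K[X]} (h : taylor 1 p = p)
    (h₀ : p.eval 0 = 0) : p = 0 := by
  have hnat : ∀ n : ℕ, p.eval (n : K) = 0 := by
    intro n
    induction n with
    | zero => simpa using h₀
    | succ n ih => rw [Nat.cast_succ, ← taylor_eval, h, ih]
  exact eq_zero_of_infinite_isRoot p
    (Set.infinite_of_injective_forall_mem Nat.cast_injective hnat)

end Field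

end Polynomial

lemma sum_update_sub_one_add_one {ι : Type*} [Fintype ι] [DecidableEq ι] {d : ι → ℕ} {k₀ : ι}
    (h : d k₀ ≠ 0) : ∑ k, Function.update d k₀ (d k₀ - 1) k + 1 = ∑ k, d k := by
  rw [sum_update_of_mem (mem_univ k₀), add_right_comm, Nat.sub_add_cancel (by omega),
    ← add_sum_erase _ _ (mem_univ k₀), sdiff_singleton_eq_erase]

lemma sum_eval_smul_taylor_sub_smul_mul_pow {R : Type*} [CommRing R] {ι : Type*} [Fintype ι]
    (Q : ι → R[X]) (lam : ι → R) (μ : R) (n : ℕ) :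
    ∑ k, (lam k • taylor 1 (Q k) - μ • Q k).eval (n : R) * lam k ^ n =
      ∑ k, (Q k).eval ((n + 1 : ℕ) : R) * lam k ^ (n + 1) -
        μ * ∑ k, (Q k).eval (n : R) * lam k ^ n := by
  rw [mul_sum, ← sum_sub_distrib]
  refine sum_congr rfl fun k _ => ?_
  simp only [eval_sub, eval_smul, smul_eq_mul, taylor_eval, Nat.cast_succ]
  ring

theorem eq_zero_of_sum_eval_mul_pow_eq_zero {K : Type*} [Field K] [CharZero K] {ι : Type*}
    [Fintype ι] [DecidableEq ι] {lam : ι → K} (hinj : Function.Injective lam)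
    (hne : ∀ k, lam k ≠ 0) {d : ι → ℕ} {Q : ι → K[X]} (hdeg : ∀ k, (Q k).degree < d k)
    (hvan : ∀ n < ∑ k, d k, ∑ k, (Q k).eval (n : K) * lam k ^ n = 0) : ∀ k, Q k = 0 := by
  obtain ⟨D, hD⟩ : ∃ D, ∑ k, d k = D := ⟨_, rfl⟩
  induction D generalizing d Q with
  | zero =>
    intro k
    simpa [sum_eq_zero_iff.mp hD k (mem_univ k)] using hdeg k
  | succ D ih =>
    obtain ⟨k₀, hk₀⟩ : ∃ k₀, d k₀ ≠ 0 := by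
      by_contra! h
      simp [h] at hD
    -- Applying `E - lam k₀` to the sequence, `E` the index shift, lowers the degree bound at `k₀`.
    obtain ⟨R, hR⟩ : ∃ R : ι → K[X], ∀ k, R k = lam k • taylor 1 (Q k) - lam k₀ • Q k :=
      ⟨_, fun k => rfl⟩
    have hR_deg : ∀ k, (R k).degree < Function.update d k₀ (d k₀ - 1) k := by
      intro k
      rcases eq_or_ne k k₀ with rfl | hk
      · rw [Function.update_self, hR, ← smul_sub]
        refine (degree_smul_le _ _).trans_lt (degree_taylor_sub_lt 1 ?_)
        rw [Nat.sub_add_cancel (Nat.one_le_iff_ne_zero.mpr hk₀)]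
        exact hdeg k
      · rw [Function.update_of_ne hk, hR]
        exact degree_smul_taylor_sub_smul_lt _ _ _ (hdeg k)
    have hR_sum := sum_update_sub_one_add_one hk₀
    have hR_zero : ∀ k, R k = 0 := ih hR_deg (fun n hn => by
      simp only [hR, sum_eval_smul_taylor_sub_smul_mul_pow]
      rw [hvan (n + 1) (by omega), hvan n (by omega), mul_zero, sub_zero]) (by omega)
    have hQ_ne : ∀ k ≠ k₀, Q k = 0 := fun k hk =>
      eq_zero_of_smul_taylor_eq_smul (hinj.ne hk) (sub_eq_zero.mp (hR k ▸ hR_zero k))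
    have hQ₀ : Q k₀ = 0 := by
      refine eq_zero_of_taylor_one_eq_self ?_ ?_
      · have := hR_zero k₀
        rw [hR, ← smul_sub, smul_eq_zero, sub_eq_zero] at this
        exact this.resolve_left (hne k₀)
      · have := hvan 0 (by omega)
        rwa [sum_eq_single k₀ (fun k _ hk => by rw [hQ_ne k hk, eval_zero, zero_mul])
          (fun h => absurd (mem_univ k₀) h), Nat.cast_zero, pow_zero, mul_one] at this
    intro k
    rcases eq_or_ne k k₀ with rfl | hk
    · exact hQ₀
    · exact hQ_ne k hk

lemma sum_pow_mul_eq_sum_eval_shiftSum {R : Type*} [CommSemiring R] {ι : Type*} [Fintype ι]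
    {f : ℕ → R} {lam : ι → R} {P : ι → R[X]}
    (hf : ∀ n : ℕ, f n = ∑ k, (P k).eval (n : R) * lam k ^ n) (c : R) (L i : ℕ) :
    ∑ j ∈ range L, c ^ j * f (i + j) =
      ∑ k, (shiftSum (c * lam k) L (P k)).eval (i : R) * lam k ^ i := by
  simp only [eval_shiftSum, hf, mul_sum, sum_mul]
  rw [sum_comm]
  refine sum_congr rfl fun k _ => sum_congr rfl fun j _ => ?_
  push_cast
  ring

lemma shiftSum_eq_zero_of_sum_pow_mul_eq_zero {K : Type*} [Field K] [CharZero K] {ι : Type*}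
    [Fintype ι] [DecidableEq ι] {f : ℕ → K} {lam : ι → K} (hinj : Function.Injective lam)
    (hne : ∀ k, lam k ≠ 0) {P : ι → K[X]}
    (hf : ∀ n : ℕ, f n = ∑ k, (P k).eval (n : K) * lam k ^ n) {c : K} {L : ℕ}
    (hvan : ∀ i < ∑ k, ((P k).natDegree + 1), ∑ j ∈ range L, c ^ j * f (i + j) = 0) :
    ∀ k, shiftSum (c * lam k) L (P k) = 0 :=
  eq_zero_of_sum_eval_mul_pow_eq_zero hinj hne (d := fun k => (P k).natDegree + 1)
    (fun k => (degree_shiftSum_le _ _ _).trans_lt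
      (degree_le_natDegree.trans_lt (by exact_mod_cast Nat.lt_succ_self _)))
    (fun n hn => by rw [← sum_pow_mul_eq_sum_eval_shiftSum hf]; exact hvan n hn)

lemma sum_pow_mul_eq_zero_of_eq_sum_exp {L : ℕ} {c : ℂ} (hc : c ≠ 0) {f a : ℕ → ℂ}
    (hf : ∀ n, f n = ∑ k ∈ Ico 1 L, a k * (Complex.exp (2 * π * Complex.I * k / L) / c) ^ n)
    (i : ℕ) : ∑ j ∈ range L, c ^ j * f (i + j) = 0 := by
  simp only [hf, mul_sum]
  rw [sum_comm]
  refine sum_eq_zero fun k hk => ?_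
  have hL : L ≠ 0 := by rw [mem_Ico] at hk; omega
  set z := Complex.exp (2 * π * Complex.I * k / L) / c
  calc ∑ j ∈ range L, c ^ j * (a k * z ^ (i + j))
      = a k * z ^ i * ∑ j ∈ range L, (c * z) ^ j := by
        rw [mul_sum]
        exact sum_congr rfl fun j _ => by ring
    _ = 0 := by
        rw [mul_div_cancel₀ _ hc, (Complex.geom_sum_eq_zero_iff_exists_exp hL).mpr ⟨k, hk, rfl⟩,
          mul_zero]

lemma exists_sum_eq_sum_comp_of_injective {ι α M : Type*} [Fintype ι] [DecidableEq α]
    [Semiring M] {κ : ι → α} (hκ : Function.Injective κ) {s : Finset α} (hκs : ∀ k, κ k ∈ s)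
    {a : ι → M} {k₀ : ι} (ha : a k₀ ≠ 0) :
    ∃ c : α → M, (∃ x ∈ s, c x ≠ 0) ∧ ∀ g : α → M, ∑ k, a k * g (κ k) = ∑ x ∈ s, c x * g x := by
  refine ⟨fun x => ∑ k, if κ k = x then a k else 0, ⟨κ k₀, hκs k₀, ?_⟩, fun g => ?_⟩
  · dsimp only
    rwa [sum_eq_single k₀ (fun k _ hk => if_neg (hκ.ne hk)) (fun h => absurd (mem_univ k₀) h),
      if_pos rfl]
  · simp only [sum_mul, ite_mul, zero_mul]
    rw [sum_comm]
    exact sum_congr rfl fun k _ => by rw [sum_ite_eq, if_pos (hκs k)]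

lemma hinner_eq_star_dotProduct {L : ℕ} (u v : Fin L → ℂ) : hinner u v = star u ⬝ᵥ v := rfl

lemma hinner_eq_zero_of_mem_span {L : ℕ} {S T : Set (Fin L → ℂ)}
    (h : ∀ u ∈ S, ∀ v ∈ T, hinner u v = 0) {u v : Fin L → ℂ}
    (hu : u ∈ Submodule.span ℂ S) (hv : v ∈ Submodule.span ℂ T) : hinner u v = 0 := by
  induction hu, hv using Submodule.span_induction₂ with
  | mem_mem u v hu hv => exact h u hu v hv
  | _ => simp_all [hinner_eq_star_dotProduct, add_dotProduct, dotProduct_add]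

lemma trajSpace_orthogonal_iff {f g : ℕ → ℂ} {N L : ℕ} :
    (∀ u ∈ trajSpace f N L, ∀ v ∈ trajSpace g N L, hinner u v = 0) ↔
      ∀ i i', i + L ≤ N → i' + L ≤ N →
        ∑ j ∈ range L, (starRingEnd ℂ) (f (i + j)) * g (i' + j) = 0 := by
  have hlag : ∀ i i', hinner (fun j : Fin L => f (i + j)) (fun j : Fin L => g (i' + j)) =
      ∑ j ∈ range L, (starRingEnd ℂ) (f (i + j)) * g (i' + j) := fun i i' =>
    Fin.sum_univ_eq_sum_range (fun j => (starRingEnd ℂ) (f (i + j)) * g (i' + j)) L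
  constructor
  · intro h i i' hi hi'
    rw [← hlag]
    exact h _ (Submodule.subset_span ⟨i, hi, rfl⟩) _ (Submodule.subset_span ⟨i', hi', rfl⟩)
  · intro h u hu v hv
    refine hinner_eq_zero_of_mem_span ?_ hu hv
    rintro _ ⟨i, hi, rfl⟩ _ ⟨i', hi', rfl⟩
    rw [hlag]
    exact h i i' hi hi'

lemma trajSpace_pow_orthogonal_iff {g : ℕ → ℂ} {N L : ℕ} (hLN : L ≤ N) {lam₀ : ℂ}
    (hlam₀ : lam₀ ≠ 0) :
    (∀ u ∈ trajSpace (lam₀ ^ ·) N L, ∀ v ∈ trajSpace g N L, hinner u v = 0) ↔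
      ∀ i, i + L ≤ N → ∑ j ∈ range L, (starRingEnd ℂ) lam₀ ^ j * g (i + j) = 0 := by
  have hfactor : ∀ i i', ∑ j ∈ range L, (starRingEnd ℂ) (lam₀ ^ (i + j)) * g (i' + j) =
      (starRingEnd ℂ) lam₀ ^ i * ∑ j ∈ range L, (starRingEnd ℂ) lam₀ ^ j * g (i' + j) := by
    intro i i'
    rw [mul_sum]
    exact sum_congr rfl fun j _ => by rw [pow_add, map_mul, map_pow, map_pow, mul_assoc]
  simp only [trajSpace_orthogonal_iff, hfactor, mul_eq_zero, pow_eq_zero_iff',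
    map_eq_zero, hlam₀, false_and, false_or]
  exact ⟨fun h i hi => h 0 i (by omega) hi, fun h _ i' _ hi' => h i' hi'⟩

/-- A nonzero series of finite difference dimension is left-separable from the
exponential series `f₁ n = λⁿ` (`λ ≠ 0`, `L ≤ N/2`) iff it is a combination of
the exponentials `μₖⁿ` with `μₖ = exp(2πik/L)/conj λ`, `0 < k < L`. -/
theorem left_separable_from_exponential_iff
    (N L : ℕ) (hL : 1 < L) (hLN : 2 * L ≤ N)
    (lam₀ : ℂ) (hlam₀ : lam₀ ≠ 0) (f₁ : ℕ → ℂ) (hf₁ : ∀ n, f₁ n = lam₀ ^ n)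
    (f₂ : ℕ → ℂ) (m : ℕ) (hm : 0 < m) (lam : Fin m → ℂ) (P : Fin m → Polynomial ℂ)
    (hinj : Function.Injective lam) (hne : ∀ k, lam k ≠ 0) (hP : ∀ k, P k ≠ 0)
    (hf₂ : ∀ n : ℕ, f₂ n = ∑ k, (P k).eval (n : ℂ) * lam k ^ n)
    (hdN : 2 * (∑ k, ((P k).natDegree + 1)) ≤ N) :
    (∀ u ∈ trajSpace f₁ N L, ∀ v ∈ trajSpace f₂ N L, hinner u v = 0) ↔
      ∃ c₂ : ℕ → ℂ, (∃ k, 0 < k ∧ k < L ∧ c₂ k ≠ 0) ∧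
        ∀ n : ℕ, f₂ n = ∑ k ∈ Finset.Ico 1 L,
          c₂ k * (Complex.exp (2 * π * Complex.I * k / L) / (starRingEnd ℂ) lam₀) ^ n := by
  obtain rfl : f₁ = (lam₀ ^ ·) := funext hf₁
  have hL₀ : L ≠ 0 := by omega
  have hc : (starRingEnd ℂ) lam₀ ≠ 0 := (_root_.map_ne_zero _).mpr hlam₀
  rw [trajSpace_pow_orthogonal_iff (by omega) hlam₀]
  constructor
  · intro hvan
    have hshift := shiftSum_eq_zero_of_sum_pow_mul_eq_zero hinj hne hf₂
      fun i hi => hvan i (by omega)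
    have hconst : ∀ k, P k = C ((P k).coeff 0) := fun k =>
      eq_C_of_natDegree_eq_zero (natDegree_eq_zero_of_shiftSum_eq_zero hL₀ (hshift k))
    have hroot : ∀ k, ∃ k' ∈ Ico 1 L,
        (starRingEnd ℂ) lam₀ * lam k = Complex.exp (2 * π * Complex.I * k' / L) := fun k =>
      (Complex.geom_sum_eq_zero_iff_exists_exp hL₀).mp
        (geom_sum_eq_zero_of_shiftSum_eq_zero (hP k) (hshift k))
    choose κ hκL hκ using hroot
    have hlam : ∀ k, lam k = Complex.exp (2 * π * Complex.I * κ k / L) / (starRingEnd ℂ) lam₀ :=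
      fun k => by rw [← hκ k, mul_div_cancel_left₀ _ hc]
    have hκinj : Function.Injective κ := fun k k' h => hinj (by rw [hlam, hlam, h])
    obtain ⟨c₂, ⟨k, hk, hc₂k⟩, hsum⟩ := exists_sum_eq_sum_comp_of_injective hκinj hκL
      (a := fun k => (P k).coeff 0) (k₀ := ⟨0, hm⟩) fun h => hP _ (by rw [hconst, h, C_0])
    rw [mem_Ico] at hk
    refine ⟨c₂, ⟨k, hk.1, hk.2, hc₂k⟩, fun n => ?_⟩
    rw [hf₂, ← hsum]
    refine sum_congr rfl fun k _ => ?_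
    rw [hconst k, eval_C, hlam, coeff_C_zero]
  · rintro ⟨c₂, -, hf⟩ i -
    exact sum_pow_mul_eq_zero_of_eq_sum_exp hc hf i
end

section
/- Let P(z) = p_d z^d + … + p_0 with p_0, p_d ≠ 0, and let û(z) = |p_0|^{-2}|\hat P(z)|² be the weight associated with the reversed polynomial \hat P(z) = p_d + p_{d-1}z + … + p_0 z^d, while t(z) = |P(z)|². If {H_n} and {G_n} are the monically-normalized orthogonal polynomial systems for t and û respectively, then the roots of G_n are exactly the complex conjugates of the roots of H_n for every n. -/
/-!
On the unit circle `z̄ = z⁻¹`, so `|P̂(z)|² = |zᵈ P(z⁻¹)|² = |P(z̄)|²`: the weight `û` is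
`|p₀|⁻²` times the reflection `θ ↦ t(-θ)` of `t`. Conjugating coefficients and substituting
`θ ↦ -θ` therefore turns a `û`-orthogonal family into a `t`-orthogonal one, so the polynomials
`Ḡₙ` (conjugated coefficients) are monic `t`-orthogonal. Since `t = |P|²` with `P ≠ 0` gives a
positive definite inner product, monic orthogonal polynomials are unique: `Hₙ = Ḡₙ`, and
`Ḡₙ(z̄) = conj (Gₙ(z))`.
-/

open Polynomial Real MeasureTheory Finset

/-- The inner product on complex polynomials induced by an integrable weight `w`
on the unit circle. -/
noncomputable def circleInner (w : ℝ → ℝ) (p q : Polynomial ℂ) : ℂ :=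
  (1 / (2 * π)) * ∫ θ in (-π)..π,
    p.eval (Complex.exp (θ * Complex.I)) *
      (starRingEnd ℂ) (q.eval (Complex.exp (θ * Complex.I))) * (w θ : ℂ)

theorem Polynomial.eval_map_conj (q : ℂ[X]) (z : ℂ) :
    (q.map (starRingEnd ℂ)).eval z = starRingEnd ℂ (q.eval (starRingEnd ℂ z)) := by
  induction q using Polynomial.induction_on with
  | C c => simp
  | add p q hp hq => simp [hp, hq]
  | monomial n c _ => simp

theorem LinearMap.map_eq_zero_of_degree_lt_of_monic {R M : Type*} [CommRing R] [AddCommGroup M]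
    [Module R M] (L : R[X] →ₗ[R] M) (H : ℕ → R[X])
    (hH : ∀ k, (H k).Monic ∧ (H k).natDegree = k) (n : ℕ) (hL : ∀ k < n, L (H k) = 0)
    (q : R[X]) (hq : q.degree < n) : L q = 0 := by
  induction n generalizing q with
  | zero =>
    rw [Nat.cast_zero, Nat.WithBot.lt_zero_iff, degree_eq_bot] at hq
    rw [hq, map_zero]
  | succ m ih =>
    have hlower : (q - q.coeff m • H m).degree < m := by
      rw [degree_lt_iff_coeff_zero] at hq ⊢
      intro j hj
      rcases hj.eq_or_lt with rfl | hlt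
      · have hlead : (H m).coeff m = 1 := by simpa [(hH m).2] using (hH m).1.coeff_natDegree
        simp [hlead]
      · simp [hq j hlt, coeff_eq_zero_of_natDegree_lt ((hH m).2 ▸ hlt)]
    have := ih (fun k hk => hL k (by omega)) _ hlower
    rwa [map_sub, map_smul, hL m (by omega), smul_zero, sub_zero] at this

theorem continuous_eval_exp_mul_I (q : ℂ[X]) :
    Continuous fun θ : ℝ => q.eval (Complex.exp (θ * Complex.I)) := by
  fun_prop

theorem intervalIntegrable_circleInner_integrand {w : ℝ → ℝ} (hw : Continuous w) (p q : ℂ[X]) :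
    IntervalIntegrable (fun θ : ℝ => p.eval (Complex.exp (θ * Complex.I)) *
      starRingEnd ℂ (q.eval (Complex.exp (θ * Complex.I))) * (w θ : ℂ)) volume (-π) π :=
  ((continuous_eval_exp_mul_I p).mul (Complex.continuous_conj.comp (continuous_eval_exp_mul_I q))
    |>.mul (Complex.continuous_ofReal.comp hw)).intervalIntegrable _ _

noncomputable def circleInnerLeft {w : ℝ → ℝ} (hw : Continuous w) (r : ℂ[X]) :
    ℂ[X] →ₗ[ℂ] ℂ where
  toFun q := circleInner w q r
  map_add' p q := by
    simp only [circleInner, ← mul_add, eval_add, add_mul]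
    rw [intervalIntegral.integral_add (intervalIntegrable_circleInner_integrand hw p r)
      (intervalIntegrable_circleInner_integrand hw q r)]
  map_smul' c q := by
    simp only [circleInner, eval_smul, smul_eq_mul, mul_assoc, intervalIntegral.integral_const_mul,
      RingHom.id_apply]
    ring

theorem circleInner_sub_right {w : ℝ → ℝ} (hw : Continuous w) (p q r : ℂ[X]) :
    circleInner w p (q - r) = circleInner w p q - circleInner w p r := by
  simp only [circleInner, eval_sub, map_sub, mul_sub, sub_mul]
  rw [intervalIntegral.integral_sub (intervalIntegrable_circleInner_integrand hw p q)
    (intervalIntegrable_circleInner_integrand hw p r), mul_sub]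

theorem circleInner_eq_zero_of_degree_lt {w : ℝ → ℝ} (hw : Continuous w) {H : ℕ → ℂ[X]}
    (hH : ∀ n, (H n).Monic ∧ (H n).natDegree = n)
    (horth : ∀ m n : ℕ, m ≠ n → circleInner w (H m) (H n) = 0)
    {n : ℕ} {q : ℂ[X]} (hq : q.degree < n) : circleInner w q (H n) = 0 :=
  (circleInnerLeft hw (H n)).map_eq_zero_of_degree_lt_of_monic H hH n
    (fun k hk => horth k n hk.ne) q hq

theorem exists_mem_Ioc_eval_exp_mul_I_ne_zero {R : ℂ[X]} (hR : R ≠ 0) :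
    ∃ θ ∈ Set.Ioc (-π) π, R.eval (Complex.exp (θ * Complex.I)) ≠ 0 := by
  by_contra! hroot
  have hinj : Set.InjOn (fun θ : ℝ => Complex.exp (θ * Complex.I)) (Set.Ioc (-π) π) :=
    Subtype.val_injective.comp_injOn (Circle.exp_injOn_Ioc (by linarith))
  exact hR (eq_zero_of_infinite_isRoot R
    (Set.infinite_of_injOn_mapsTo hinj (fun θ hθ => hroot θ hθ)
      (Set.Ioc_infinite (by linarith [pi_pos]))))

theorem circleInner_normSq_weight_self (P q : ℂ[X]) :
    circleInner (fun θ => Complex.normSq (P.eval (Complex.exp (θ * Complex.I)))) q q =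
      ((1 / (2 * π) * ∫ θ in (-π)..π,
        Complex.normSq ((q * P).eval (Complex.exp (θ * Complex.I))) : ℝ) : ℂ) := by
  rw [circleInner, Complex.ofReal_mul, ← intervalIntegral.integral_ofReal]
  push_cast
  congr 1
  refine intervalIntegral.integral_congr fun θ _ => ?_
  simp only [eval_mul, Complex.normSq_mul, Complex.ofReal_mul, ← Complex.mul_conj]

theorem eq_zero_of_circleInner_normSq_weight_self_eq_zero {P q : ℂ[X]} (hP : P ≠ 0)
    (hq : circleInner (fun θ => Complex.normSq (P.eval (Complex.exp (θ * Complex.I)))) q q = 0) :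
    q = 0 := by
  by_contra hq0
  obtain ⟨θ, hθ, hne⟩ := exists_mem_Ioc_eval_exp_mul_I_ne_zero (mul_ne_zero hq0 hP)
  have hpos : 0 < ∫ θ in (-π)..π, Complex.normSq ((q * P).eval (Complex.exp (θ * Complex.I))) :=
    intervalIntegral.integral_pos (by linarith [pi_pos])
      (Complex.continuous_normSq.comp (continuous_eval_exp_mul_I _)).continuousOn
      (fun _ _ => Complex.normSq_nonneg _) ⟨θ, Set.Ioc_subset_Icc_self hθ, Complex.normSq_pos.2 hne⟩
  rw [circleInner_normSq_weight_self, Complex.ofReal_eq_zero] at hq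
  have : 0 < 1 / (2 * π) := by positivity
  nlinarith

theorem eq_of_monic_of_circleInner_orthogonal {w : ℝ → ℝ} (hw : Continuous w)
    (hdef : ∀ q, circleInner w q q = 0 → q = 0) {H K : ℕ → ℂ[X]}
    (hH : ∀ n, (H n).Monic ∧ (H n).natDegree = n) (hK : ∀ n, (K n).Monic ∧ (K n).natDegree = n)
    (hHorth : ∀ m n : ℕ, m ≠ n → circleInner w (H m) (H n) = 0)
    (hKorth : ∀ m n : ℕ, m ≠ n → circleInner w (K m) (K n) = 0) (n : ℕ) : H n = K n := by
  have hdegree : ∀ {F : ℕ → ℂ[X]}, (∀ n, (F n).Monic ∧ (F n).natDegree = n) → (F n).degree = n :=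
    fun hF => by rw [degree_eq_natDegree (hF n).1.ne_zero, (hF n).2]
  have hsub : (H n - K n).degree < n := by
    simpa [hdegree hH] using degree_sub_lt_left (by rw [hdegree hH, hdegree hK]) (hH n).1.ne_zero
      (by rw [(hH n).1.leadingCoeff, (hK n).1.leadingCoeff])
  rw [← sub_eq_zero]
  apply hdef
  rw [circleInner_sub_right hw, circleInner_eq_zero_of_degree_lt hw hH hHorth hsub,
    circleInner_eq_zero_of_degree_lt hw hK hKorth hsub, sub_zero]

theorem circleInner_const_mul_weight (c : ℝ) (w : ℝ → ℝ) (q r : ℂ[X]) :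
    circleInner (fun θ => c * w θ) q r = c * circleInner w q r := by
  rw [circleInner, circleInner, mul_left_comm (c : ℂ),
    ← intervalIntegral.integral_const_mul (c : ℂ)]
  congr 1
  refine intervalIntegral.integral_congr fun θ _ => ?_
  push_cast
  ring

theorem circleInner_map_conj (w : ℝ → ℝ) (q r : ℂ[X]) :
    circleInner w (q.map (starRingEnd ℂ)) (r.map (starRingEnd ℂ)) =
      starRingEnd ℂ (circleInner (fun θ => w (-θ)) q r) := by
  have hexp : ∀ θ : ℝ, starRingEnd ℂ (Complex.exp (θ * Complex.I)) =
      Complex.exp ((-θ : ℝ) * Complex.I) := fun θ => by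
    rw [← Complex.exp_conj]; simp
  have hreflect : ∀ f : ℝ → ℂ, ∫ θ in (-π)..π, f θ = ∫ θ in (-π)..π, f (-θ) := fun f => by
    rw [intervalIntegral.integral_comp_neg, neg_neg]
  simp only [circleInner, map_mul, ← intervalIntegral.intervalIntegral_conj, eval_map_conj, hexp,
    Complex.conj_conj, Complex.conj_ofReal, map_div₀, map_one, map_ofNat]
  rw [hreflect]
  simp only [neg_neg]

theorem eval_sum_reverse {K : Type*} [Field K] (d : ℕ) (p : ℕ → K) {z : K} (hz : z ≠ 0) :
    (∑ k ∈ range (d + 1), C (p (d - k)) * X ^ k).eval z =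
      z ^ d * (∑ k ∈ range (d + 1), C (p k) * X ^ k).eval z⁻¹ := by
  simp only [eval_finsetSum, eval_mul, eval_C, eval_pow, eval_X, mul_sum]
  rw [← sum_range_reflect]
  refine sum_congr rfl fun k hk => ?_
  have hkd : k ≤ d := Nat.lt_succ_iff.mp (mem_range.mp hk)
  rw [add_tsub_cancel_right, Nat.sub_sub_self hkd, pow_sub₀ z hz hkd, inv_pow]
  ring

theorem normSq_eval_sum_reverse_exp (d : ℕ) (p : ℕ → ℂ) (θ : ℝ) :
    Complex.normSq ((∑ k ∈ range (d + 1), C (p (d - k)) * X ^ k).eval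
      (Complex.exp (θ * Complex.I))) =
    Complex.normSq ((∑ k ∈ range (d + 1), C (p k) * X ^ k).eval
      (Complex.exp ((-θ : ℝ) * Complex.I))) := by
  rw [eval_sum_reverse d p (Complex.exp_ne_zero _), Complex.normSq_mul, map_pow,
    Complex.normSq_eq_norm_sq (Complex.exp _), Complex.norm_exp_ofReal_mul_I, one_pow, one_pow,
    one_mul, ← Complex.exp_neg, Complex.ofReal_neg, neg_mul]

theorem reversed_weight_orthogonal_polynomials_roots_conjugate_general
    (d : ℕ) (p : ℕ → ℂ) (hp0 : p 0 ≠ 0)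
    (t u : ℝ → ℝ)
    (ht : ∀ θ : ℝ, t θ = Complex.normSq
      ((∑ k ∈ Finset.range (d + 1), C (p k) * X ^ k).eval (Complex.exp (θ * Complex.I))))
    (hu : ∀ θ : ℝ, u θ = (Complex.normSq (p 0))⁻¹ * Complex.normSq
      ((∑ k ∈ Finset.range (d + 1), C (p (d - k)) * X ^ k).eval (Complex.exp (θ * Complex.I))))
    (H G : ℕ → Polynomial ℂ)
    (hHmonic : ∀ n, (H n).Monic ∧ (H n).natDegree = n)
    (hGmonic : ∀ n, (G n).Monic ∧ (G n).natDegree = n)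
    (hHorth : ∀ m n : ℕ, m ≠ n → circleInner t (H m) (H n) = 0)
    (hGorth : ∀ m n : ℕ, m ≠ n → circleInner u (G m) (G n) = 0) :
    ∀ (n : ℕ) (z : ℂ), (G n).eval z = 0 ↔ (H n).eval ((starRingEnd ℂ) z) = 0 := by
  intro n z
  set P := ∑ k ∈ Finset.range (d + 1), C (p k) * X ^ k
  have hP : P ≠ 0 := fun h => hp0 (by simpa [P, finsetSum_coeff] using congrArg (coeff · 0) h)
  have htP : t = fun θ : ℝ => Complex.normSq (P.eval (Complex.exp (θ * Complex.I))) := funext ht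
  have htc : Continuous t := htP ▸ Complex.continuous_normSq.comp (continuous_eval_exp_mul_I P)
  have hut : u = fun θ => (Complex.normSq (p 0))⁻¹ * t (-θ) :=
    funext fun θ => by rw [hu, ht, normSq_eval_sum_reverse_exp]
  have hGconj : ∀ n,
      ((G n).map (starRingEnd ℂ)).Monic ∧ ((G n).map (starRingEnd ℂ)).natDegree = n :=
    fun n => ⟨(hGmonic n).1.map _, by rw [natDegree_map, (hGmonic n).2]⟩
  have hGconj_orth : ∀ m n : ℕ, m ≠ n →
      circleInner t ((G m).map (starRingEnd ℂ)) ((G n).map (starRingEnd ℂ)) = 0 := by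
    intro m n hmn
    have hG := hGorth m n hmn
    rw [hut, circleInner_const_mul_weight] at hG
    rw [circleInner_map_conj, (mul_eq_zero.mp hG).resolve_left (by simpa using hp0), map_zero]
  have hHG : H n = (G n).map (starRingEnd ℂ) :=
    eq_of_monic_of_circleInner_orthogonal htc
      (fun q hq => eq_zero_of_circleInner_normSq_weight_self_eq_zero hP (htP ▸ hq))
      hHmonic hGconj hHorth hGconj_orth n
  rw [hHG, eval_map_conj, Complex.conj_conj, map_eq_zero]

/-- For the weight `t(z) = |P(z)|²` and the weight `û(z) = |p₀|⁻²|P̂(z)|²` of the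
reversed polynomial `P̂`, the roots of the monic orthogonal polynomials `G_n`
(for `û`) are exactly the complex conjugates of the roots of the monic
orthogonal polynomials `H_n` (for `t`). -/
theorem reversed_weight_orthogonal_polynomials_roots_conjugate
    (d : ℕ) (p : ℕ → ℂ) (hp0 : p 0 ≠ 0) (hpd : p d ≠ 0) (hpz : ∀ k, d < k → p k = 0)
    (t u : ℝ → ℝ)
    (ht : ∀ θ : ℝ, t θ = Complex.normSq
      ((∑ k ∈ Finset.range (d + 1), C (p k) * X ^ k).eval (Complex.exp (θ * Complex.I))))
    (hu : ∀ θ : ℝ, u θ = (Complex.normSq (p 0))⁻¹ * Complex.normSq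
      ((∑ k ∈ Finset.range (d + 1), C (p (d - k)) * X ^ k).eval (Complex.exp (θ * Complex.I))))
    (H G : ℕ → Polynomial ℂ)
    (hHmonic : ∀ n, (H n).Monic ∧ (H n).natDegree = n)
    (hGmonic : ∀ n, (G n).Monic ∧ (G n).natDegree = n)
    (hHorth : ∀ m n : ℕ, m ≠ n → circleInner t (H m) (H n) = 0)
    (hGorth : ∀ m n : ℕ, m ≠ n → circleInner u (G m) (G n) = 0) :
    ∀ (n : ℕ) (z : ℂ), (G n).eval z = 0 ↔ (H n).eval ((starRingEnd ℂ) z) = 0 :=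
  reversed_weight_orthogonal_polynomials_roots_conjugate_general d p hp0 t u ht hu H G hHmonic
    hGmonic hHorth hGorth
end
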